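/- Let E ∈ M(J, {n_k}, {c_k}) be a Moran set with lim_{k→∞} (log c_k)/(log(c_1⋯c_k)) = 0. Then for every δ ∈ (0,1), h_E(δ) ≤ limsup_{q→∞} max_{1 ≤ p ≤ l_{q,δ}} (log(n_p⋯n_q))/(−log(c_p⋯c_q)). More precisely, for every s strictly greater than this limsup there exist b, c > 0 such that N_{r,R}(E) ≤ c(R/r)^s for all 0 < r < r^{1-δ} ≤ R < b. -/

import Mathlib

open Filter Topology Metric Set

/-- `coverNum X r R` : the smallest number of closed balls of radius `r` needed to cover
`X ∩ B` over all closed balls `B` of radius `R`. -/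
noncomputable def coverNum (X : Type*) [MetricSpace X] (r R : ℝ) : ℕ :=
  sSup {n : ℕ | ∃ x : X, n = sInf {m : ℕ | ∃ s : Finset X,
    s.card = m ∧ Metric.closedBall x R ⊆ ⋃ y ∈ s, Metric.closedBall y r}}

/-- `hFun X δ = inf {α ≥ 0 : ∃ b, c > 0, N_{r,R}(X) ≤ c (R/r)^α for all 0 < r < r^(1-δ) ≤ R < b}`. -/
noncomputable def hFun (X : Type*) [MetricSpace X] (δ : ℝ) : ℝ :=
  sInf {α : ℝ | 0 ≤ α ∧ ∃ b c : ℝ, 0 < b ∧ 0 < c ∧ ∀ r R : ℝ,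
    0 < r → r < r ^ (1 - δ) → r ^ (1 - δ) ≤ R → R < b →
      (coverNum X r R : ℝ) ≤ c * (R / r) ^ α}

/-- The quasi-Assouad dimension `dim_qA X = lim_{δ → 0⁺} h_X(δ)`; since `h_X` is
non-increasing in `δ`, this limit equals the supremum over `δ ∈ (0,1)`. -/
noncomputable def dimqA (X : Type*) [MetricSpace X] : ℝ :=
  sSup (hFun X '' Set.Ioo 0 1)

/-- A word `i₁ ⋯ i_k` (as a list, head = `i₁`) is admissible for the branching numbers `n`
if `1 ≤ i_t ≤ n t` for every `t`. -/
def MoranAdmissible (n : ℕ → ℕ) (w : List ℕ) : Prop :=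
  ∀ t : ℕ, t < w.length → 1 ≤ w.getD t 0 ∧ w.getD t 0 ≤ n (t + 1)

/-- `F ∈ M(J, {n_k}, {c_k})` : `F` is a Moran set with initial closed interval `J`,
branching numbers `n_k` and contraction ratios `c_k` (indices start at `1`). -/
def IsMoranSet (J : Set ℝ) (n : ℕ → ℕ) (c : ℕ → ℝ) (F : Set ℝ) : Prop :=
  ∃ A B : ℝ, A < B ∧ J = Set.Icc A B ∧
  ∃ a b : List ℕ → ℝ,
    a [] = A ∧ b [] = B ∧
    (∀ w : List ℕ, MoranAdmissible n w → ∀ j : ℕ, 1 ≤ j → j ≤ n (w.length + 1) →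
      a w ≤ a (w ++ [j]) ∧ a (w ++ [j]) < b (w ++ [j]) ∧ b (w ++ [j]) ≤ b w ∧
      b (w ++ [j]) - a (w ++ [j]) = c (w.length + 1) * (b w - a w)) ∧
    (∀ w : List ℕ, MoranAdmissible n w → ∀ j j' : ℕ, 1 ≤ j → j ≤ n (w.length + 1) →
      1 ≤ j' → j' ≤ n (w.length + 1) → j ≠ j' →
      interior (Set.Icc (a (w ++ [j])) (b (w ++ [j]))) ∩
        interior (Set.Icc (a (w ++ [j'])) (b (w ++ [j']))) = ∅) ∧
    F = ⋂ k : ℕ, ⋃ w ∈ {w : List ℕ | MoranAdmissible n w ∧ w.length = k},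
      Set.Icc (a w) (b w)

/-- `s_{p,q} = log (n_p ⋯ n_q) / (- log (c_p ⋯ c_q))`. -/
noncomputable def spq (n : ℕ → ℕ) (c : ℕ → ℝ) (p q : ℕ) : ℝ :=
  Real.log (∏ i ∈ Finset.Icc p q, (n i : ℝ)) / (-Real.log (∏ i ∈ Finset.Icc p q, c i))

/-- `l_{q,δ} = max {1 ≤ p ≤ q : log (c_p ⋯ c_q) / log (c_1 ⋯ c_q) > δ}`. -/
noncomputable def lIdx (c : ℕ → ℝ) (δ : ℝ) (q : ℕ) : ℕ :=
  sSup {p : ℕ | 1 ≤ p ∧ p ≤ q ∧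
    δ < Real.log (∏ i ∈ Finset.Icc p q, c i) / Real.log (∏ i ∈ Finset.Icc 1 q, c i)}

/-!
Fix scales `r < R`, let `L_k = |J| c_1 ⋯ c_k` be the length of the level-`k` basic intervals,
let `p` be the last level with `L_p ≥ λ R` (`λ = |J| + 2`) and `q + 1` the first level with
`L_{q+1} < r`. A ball of radius `R` meets at most three level-`p` intervals, each of which has
`n_{p+1} ⋯ n_{q+1}` descendants at level `q + 1`, and each of those is covered by one ball of
radius `r` centred in `E`. Hence, with `P_k = c_1 ⋯ c_k`,
`N_{r,R}(E) ≤ 3 n_{p+1} ⋯ n_{q+1} = 3 (P_p / P_{q+1}) ^ s_{p+1,q+1}`.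
The constraint `r ^ (1 - δ) ≤ R` forces `p + 1 ≤ l_{q+1,δ}`, so at small scales the exponent is
below any `s₁` above the limsup, and since `log c_k = o(log P_k)` the ratio `P_p / P_{q+1}`
exceeds `λ R / r` only by a factor `(R / r) ^ o(1)`.
-/

theorem coverNum_le_of_forall {X : Type*} [MetricSpace X] {r R : ℝ} {N : ℕ}
    (h : ∀ x : X, ∃ s : Finset X, s.card ≤ N ∧ closedBall x R ⊆ ⋃ y ∈ s, closedBall y r) :
    coverNum X r R ≤ N := by
  refine csSup_le' ?_
  rintro _ ⟨x, rfl⟩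
  obtain ⟨s, hs, hcover⟩ := h x
  exact le_trans (Nat.sInf_le ⟨s, rfl, hcover⟩) hs

theorem hFun_le_of_forall_lt {X : Type*} [MetricSpace X] {δ L : ℝ} (hL : 0 ≤ L)
    (h : ∀ s, L < s → ∃ b C : ℝ, 0 < b ∧ 0 < C ∧ ∀ r R : ℝ,
      0 < r → r < r ^ (1 - δ) → r ^ (1 - δ) ≤ R → R < b → (coverNum X r R : ℝ) ≤ C * (R / r) ^ s) :
    hFun X δ ≤ L :=
  le_of_forall_pos_le_add fun _ hε =>
    csInf_le ⟨0, fun _ hα => hα.1⟩ ⟨by linarith, h _ (by linarith)⟩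

theorem exists_finset_cover_of_forall_mem_Icc {E : Set ℝ} {ι : Type*} (T : Finset ι)
    {a b : ι → ℝ} {r R : ℝ} (hT : ∀ i ∈ T, b i - a i ≤ r) (x : E)
    (hcov : ∀ z : E, dist z x ≤ R → ∃ i ∈ T, (z : ℝ) ∈ Icc (a i) (b i)) :
    ∃ s : Finset E, s.card ≤ T.card ∧ closedBall x R ⊆ ⋃ y ∈ s, closedBall y r := by
  classical
  let center : ι → E := fun i =>
    if h : ∃ z : E, dist z x ≤ R ∧ (z : ℝ) ∈ Icc (a i) (b i) then h.choose else x
  refine ⟨T.image center, Finset.card_image_le, fun z hz => ?_⟩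
  obtain ⟨i, hi, hzi⟩ := hcov z hz
  have h : ∃ z : E, dist z x ≤ R ∧ (z : ℝ) ∈ Icc (a i) (b i) := ⟨z, hz, hzi⟩
  have hci : ((center i : E) : ℝ) ∈ Icc (a i) (b i) := by
    simpa only [center, dif_pos h] using h.choose_spec.2
  refine mem_iUnion₂.mpr ⟨center i, Finset.mem_image_of_mem _ hi, ?_⟩
  rw [mem_closedBall, Subtype.dist_eq, Real.dist_eq, abs_le]
  constructor <;> linarith [hzi.1, hzi.2, hci.1, hci.2, hT i hi]

theorem card_le_three_of_pairwiseDisjoint_Ioo {ι : Type*} (s : Finset ι) {a b : ι → ℝ}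
    {L y R : ℝ} (hL : 0 < L) (hRL : 2 * R ≤ L) (hlen : ∀ i ∈ s, b i - a i = L)
    (hdisj : (s : Set ι).PairwiseDisjoint fun i => Ioo (a i) (b i))
    (hmeet : ∀ i ∈ s, (Icc (a i) (b i) ∩ Icc (y - R) (y + R)).Nonempty) :
    s.card ≤ 3 := by
  have hsub : ⋃ i ∈ s, Ioo (a i) (b i) ⊆ Icc (y - R - L) (y + R + L) := by
    refine iUnion₂_subset fun i hi t ht => ?_
    obtain ⟨z, hz, hzy⟩ := hmeet i hi
    have hleni := hlen i hi
    exact ⟨by linarith [ht.1, hz.2, hzy.1], by linarith [ht.2, hz.1, hzy.2]⟩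
  have hvol : (s.card : ENNReal) * ENNReal.ofReal L ≤ 3 * ENNReal.ofReal L :=
    calc (s.card : ENNReal) * ENNReal.ofReal L
        = ∑ i ∈ s, MeasureTheory.volume (Ioo (a i) (b i)) := by
          rw [Finset.sum_congr rfl fun i hi => by rw [Real.volume_Ioo, hlen i hi],
            Finset.sum_const, nsmul_eq_mul]
      _ = MeasureTheory.volume (⋃ i ∈ s, Ioo (a i) (b i)) :=
          (MeasureTheory.measure_biUnion_finset hdisj fun _ _ => measurableSet_Ioo).symm
      _ ≤ MeasureTheory.volume (Icc (y - R - L) (y + R + L)) := MeasureTheory.measure_mono hsub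
      _ ≤ ENNReal.ofReal (3 * L) := by rw [Real.volume_Icc]; gcongr; linarith
      _ = 3 * ENNReal.ofReal L := by rw [ENNReal.ofReal_mul (by norm_num)]; norm_num
  have h3 := (ENNReal.mul_le_mul_iff_left (by simp [hL]) ENNReal.ofReal_ne_top).mp hvol
  exact_mod_cast h3

theorem MoranAdmissible.nil (n : ℕ → ℕ) : MoranAdmissible n [] := fun _ ht => absurd ht (by simp)

theorem moranAdmissible_append_singleton {n : ℕ → ℕ} {w : List ℕ} {j : ℕ} :
    MoranAdmissible n (w ++ [j]) ↔ MoranAdmissible n w ∧ 1 ≤ j ∧ j ≤ n (w.length + 1) := by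
  constructor
  · intro h
    refine ⟨fun t ht => ?_, by simpa using h w.length (by simp)⟩
    rw [← List.getD_append w [j] 0 t ht]
    exact h t (by simp; omega)
  · rintro ⟨hw, hj⟩ t ht
    rcases lt_or_ge t w.length with htw | htw
    · rw [List.getD_append w [j] 0 t htw]
      exact hw t htw
    · obtain rfl : t = w.length := by simp at ht; omega
      simpa using hj

theorem MoranAdmissible.take {n : ℕ → ℕ} {w : List ℕ} (h : MoranAdmissible n w) (p : ℕ) :
    MoranAdmissible n (w.take p) := by
  intro t ht
  rw [List.length_take] at ht
  have : (w.take p).getD t 0 = w.getD t 0 := by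
    simp only [List.getD_eq_getElem?_getD, List.getElem?_take, if_pos (show t < p by omega)]
  rw [this]
  exact h t (by omega)

def extensions (n : ℕ → ℕ) (u : List ℕ) : ℕ → Finset (List ℕ)
  | 0 => {u}
  | m + 1 => (extensions n u m).biUnion fun w =>
      (Finset.Icc 1 (n (w.length + 1))).image fun j => w ++ [j]

theorem length_of_mem_extensions {n : ℕ → ℕ} {u w : List ℕ} {m : ℕ}
    (hw : w ∈ extensions n u m) : w.length = u.length + m := by
  induction m generalizing w with
  | zero => simp_all [extensions]
  | succ m ih =>
    simp only [extensions, Finset.mem_biUnion, Finset.mem_image] at hw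
    obtain ⟨v, hv, j, -, rfl⟩ := hw
    simp [ih hv, add_assoc]

theorem MoranAdmissible.of_mem_extensions {n : ℕ → ℕ} {u w : List ℕ} {m : ℕ}
    (hu : MoranAdmissible n u) (hw : w ∈ extensions n u m) : MoranAdmissible n w := by
  induction m generalizing w with
  | zero => simp_all [extensions]
  | succ m ih =>
    simp only [extensions, Finset.mem_biUnion, Finset.mem_image, Finset.mem_Icc] at hw
    obtain ⟨v, hv, j, hj, rfl⟩ := hw
    exact moranAdmissible_append_singleton.mpr ⟨ih hv, hj⟩

theorem mem_extensions_take {n : ℕ → ℕ} {w : List ℕ} (hw : MoranAdmissible n w) (p : ℕ) :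
    w ∈ extensions n (w.take p) (w.length - p) := by
  induction w using List.reverseRecOn with
  | nil => simp [extensions]
  | append_singleton v j ih =>
    obtain ⟨hv, hj⟩ := moranAdmissible_append_singleton.mp hw
    rcases le_or_gt p v.length with hp | hp
    · rw [List.take_append_of_le_length hp, List.length_append, List.length_singleton,
        show v.length + 1 - p = v.length - p + 1 by omega, extensions]
      exact Finset.mem_biUnion.mpr ⟨v, ih hv, Finset.mem_image_of_mem _ (Finset.mem_Icc.mpr hj)⟩
    · rw [List.take_of_length_le (by simp; omega),
        show (v ++ [j]).length - p = 0 by simp; omega]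
      simp [extensions]

theorem card_extensions_le (n : ℕ → ℕ) (u : List ℕ) (m : ℕ) :
    (extensions n u m).card ≤ ∏ i ∈ Finset.Icc (u.length + 1) (u.length + m), n i := by
  induction m with
  | zero => simp [extensions]
  | succ m ih =>
    rw [extensions, ← add_assoc, Finset.prod_Icc_succ_top (by omega)]
    refine (Finset.card_biUnion_le_card_mul _ _ _ fun w hw => ?_).trans
      (Nat.mul_le_mul_right _ ih)
    rw [length_of_mem_extensions hw]
    exact Finset.card_image_le.trans (by simp)

noncomputable def cumProd (c : ℕ → ℝ) (k : ℕ) : ℝ := ∏ i ∈ Finset.Icc 1 k, c i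

theorem cumProd_succ (c : ℕ → ℝ) (k : ℕ) : cumProd c (k + 1) = cumProd c k * c (k + 1) :=
  Finset.prod_Icc_succ_top (by omega) c

section cumProd

variable {c : ℕ → ℝ}

theorem cumProd_pos (hc0 : ∀ k, 1 ≤ k → 0 < c k) (k : ℕ) : 0 < cumProd c k :=
  Finset.prod_pos fun i hi => hc0 i (Finset.mem_Icc.mp hi).1

theorem cumProd_antitone (hc0 : ∀ k, 1 ≤ k → 0 < c k) (hc1 : ∀ k, 1 ≤ k → c k ≤ 1) :
    Antitone (cumProd c) :=
  antitone_nat_of_succ_le fun k => by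
    rw [cumProd_succ]
    exact mul_le_of_le_one_right (cumProd_pos hc0 k).le (hc1 _ (by omega))

theorem cumProd_le_one (hc0 : ∀ k, 1 ≤ k → 0 < c k) (hc1 : ∀ k, 1 ≤ k → c k ≤ 1) (k : ℕ) :
    cumProd c k ≤ 1 := by
  simpa [cumProd] using cumProd_antitone hc0 hc1 (Nat.zero_le k)

theorem tendsto_cumProd_zero (hc0 : ∀ k, 1 ≤ k → 0 < c k) (hc : ∀ k, 1 ≤ k → c k ≤ 1 / 2) :
    Tendsto (cumProd c) atTop (𝓝 0) := by
  have hle (k : ℕ) : cumProd c k ≤ (1 / 2) ^ k := by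
    induction k with
    | zero => simp [cumProd]
    | succ k ih =>
      rw [cumProd_succ, pow_succ]
      exact mul_le_mul ih (hc _ (by omega)) (hc0 _ (by omega)).le (by positivity)
  exact squeeze_zero (fun k => (cumProd_pos hc0 k).le) hle
    (tendsto_pow_atTop_nhds_zero_of_lt_one (by norm_num) (by norm_num))

theorem log_prod_Icc_eq (hc0 : ∀ k, 1 ≤ k → 0 < c k) {p q : ℕ} (hpq : p ≤ q) :
    Real.log (∏ i ∈ Finset.Icc (p + 1) q, c i) =
      Real.log (cumProd c q) - Real.log (cumProd c p) := by
  have hsplit : cumProd c p * ∏ i ∈ Finset.Icc (p + 1) q, c i = cumProd c q := by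
    simp only [cumProd, Finset.Icc_add_one_left_eq_Ioc]
    exact Finset.prod_Ioc_consecutive _ (Nat.zero_le p) hpq
  rw [← hsplit, Real.log_mul (cumProd_pos hc0 p).ne' (Finset.prod_ne_zero_iff.mpr fun i hi =>
    (hc0 i (by linarith [(Finset.mem_Icc.mp hi).1])).ne')]
  ring

theorem eventually_mul_log_cumProd_le (hc0 : ∀ k, 1 ≤ k → 0 < c k) (hc1 : ∀ k, 1 ≤ k → c k < 1)
    (hlim : Tendsto (fun k => Real.log (c k) / Real.log (cumProd c k)) atTop (𝓝 0))
    {ε : ℝ} (hε : 0 < ε) :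
    ∀ᶠ k in atTop, ε * Real.log (cumProd c k) ≤ Real.log (c (k + 1)) := by
  -- `ε / (1 + ε)` absorbs the factor `c_{k+1}` of `P_{k+1} = P_k c_{k+1}`.
  have hε' : 0 < ε / (1 + ε) := by positivity
  filter_upwards [Metric.tendsto_nhds.mp (hlim.comp (tendsto_add_atTop_nat 1)) _ hε'] with k hk
  have hck := Real.log_neg (hc0 (k + 1) (by omega)) (hc1 (k + 1) (by omega))
  have hPk := Real.log_nonpos (cumProd_pos hc0 k).le
    (cumProd_le_one hc0 (fun i hi => (hc1 i hi).le) k)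
  have hsum : Real.log (cumProd c (k + 1)) = Real.log (cumProd c k) + Real.log (c (k + 1)) := by
    rw [cumProd_succ, Real.log_mul (cumProd_pos hc0 k).ne' (hc0 (k + 1) (by omega)).ne']
  rw [Function.comp_apply, Real.dist_eq, sub_zero, hsum, abs_div, abs_of_neg hck,
    abs_of_neg (by linarith), div_lt_div_iff₀ (by linarith) (by positivity)] at hk
  nlinarith

end cumProd

structure IsMoranCoding (n : ℕ → ℕ) (c : ℕ → ℝ) (a b : List ℕ → ℝ) : Prop where
  child : ∀ w : List ℕ, MoranAdmissible n w → ∀ j : ℕ, 1 ≤ j → j ≤ n (w.length + 1) →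
    a w ≤ a (w ++ [j]) ∧ a (w ++ [j]) < b (w ++ [j]) ∧ b (w ++ [j]) ≤ b w ∧
    b (w ++ [j]) - a (w ++ [j]) = c (w.length + 1) * (b w - a w)
  siblings : ∀ w : List ℕ, MoranAdmissible n w → ∀ j j' : ℕ, 1 ≤ j → j ≤ n (w.length + 1) →
    1 ≤ j' → j' ≤ n (w.length + 1) → j ≠ j' →
    interior (Icc (a (w ++ [j])) (b (w ++ [j]))) ∩
      interior (Icc (a (w ++ [j'])) (b (w ++ [j']))) = ∅

namespace IsMoranCoding

variable {n : ℕ → ℕ} {c : ℕ → ℝ} {a b : List ℕ → ℝ}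

theorem Icc_subset_take (hM : IsMoranCoding n c a b) {w : List ℕ} (hw : MoranAdmissible n w)
    (p : ℕ) : Icc (a w) (b w) ⊆ Icc (a (w.take p)) (b (w.take p)) := by
  suffices ∀ v u, MoranAdmissible n (u ++ v) → Icc (a (u ++ v)) (b (u ++ v)) ⊆ Icc (a u) (b u) by
    simpa using this (w.drop p) (w.take p) (by simpa using hw)
  intro v
  induction v using List.reverseRecOn with
  | nil => simp
  | append_singleton v j ih =>
    intro u huv
    rw [← List.append_assoc] at huv ⊢
    obtain ⟨huv, hj1, hj2⟩ := moranAdmissible_append_singleton.mp huv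
    obtain ⟨ha, -, hb, -⟩ := hM.child _ huv j hj1 hj2
    exact (Icc_subset_Icc ha hb).trans (ih u huv)

theorem length_eq (hM : IsMoranCoding n c a b) {w : List ℕ} (hw : MoranAdmissible n w) :
    b w - a w = (b [] - a []) * cumProd c w.length := by
  induction w using List.reverseRecOn with
  | nil => simp [cumProd]
  | append_singleton v j ih =>
    obtain ⟨hv, hj1, hj2⟩ := moranAdmissible_append_singleton.mp hw
    rw [(hM.child v hv j hj1 hj2).2.2.2, ih hv, List.length_append, List.length_singleton,
      cumProd_succ]
    ring

theorem disjoint_Ioo (hM : IsMoranCoding n c a b) {w w' : List ℕ} (hw : MoranAdmissible n w)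
    (hw' : MoranAdmissible n w') (hlen : w.length = w'.length) (hne : w ≠ w') :
    Disjoint (Ioo (a w) (b w)) (Ioo (a w') (b w')) := by
  induction w using List.reverseRecOn generalizing w' with
  | nil => exact absurd (List.length_eq_zero_iff.mp hlen.symm).symm hne
  | append_singleton v j ih =>
    obtain ⟨u, j', rfl⟩ := (List.eq_nil_or_concat w').resolve_left (by rintro rfl; simp at hlen)
    simp only [List.concat_eq_append, List.length_append, List.length_singleton,
      add_left_inj] at hlen hw' hne ⊢
    obtain ⟨hv, hj1, hj2⟩ := moranAdmissible_append_singleton.mp hw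
    obtain ⟨hu, hj1', hj2'⟩ := moranAdmissible_append_singleton.mp hw'
    by_cases hvu : v = u
    · subst hvu
      have hjj : j ≠ j' := fun h => hne (h ▸ rfl)
      have := hM.siblings v hv j j' hj1 hj2 hj1' hj2' hjj
      rwa [interior_Icc, interior_Icc, ← disjoint_iff_inter_eq_empty] at this
    · obtain ⟨ha, -, hb, -⟩ := hM.child v hv j hj1 hj2
      obtain ⟨ha', -, hb', -⟩ := hM.child u hu j' hj1' hj2'
      exact (ih hv hu hlen hvu).mono (Ioo_subset_Ioo ha hb) (Ioo_subset_Ioo ha' hb')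

theorem coverNum_le (hM : IsMoranCoding n c a b) {E : Set ℝ} {p q : ℕ} {r R : ℝ}
    (hE : E ⊆ ⋃ w ∈ {w : List ℕ | MoranAdmissible n w ∧ w.length = q}, Icc (a w) (b w))
    (hpq : p ≤ q) (hLp : 0 < (b [] - a []) * cumProd c p)
    (hRp : 2 * R ≤ (b [] - a []) * cumProd c p) (hrq : (b [] - a []) * cumProd c q ≤ r) :
    coverNum E r R ≤ 3 * ∏ i ∈ Finset.Icc (p + 1) q, n i := by
  classical
  refine coverNum_le_of_forall fun x => ?_
  have hmem {u w : List ℕ} {m : ℕ} (hu : MoranAdmissible n u) (hw : w ∈ extensions n u m) :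
      MoranAdmissible n w ∧ w.length = u.length + m :=
    ⟨hu.of_mem_extensions hw, length_of_mem_extensions hw⟩
  set W := (extensions n [] p).filter
    fun u => (Icc (a u) (b u) ∩ Icc ((x : ℝ) - R) (x + R)).Nonempty
  have hW {u : List ℕ} (hu : u ∈ W) : MoranAdmissible n u ∧ u.length = p := by
    simpa using hmem (MoranAdmissible.nil n) (Finset.mem_filter.mp hu).1
  have hWcard : W.card ≤ 3 :=
    card_le_three_of_pairwiseDisjoint_Ioo W hLp hRp
      (fun u hu => by rw [hM.length_eq (hW hu).1, (hW hu).2])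
      (fun u hu u' hu' hne => hM.disjoint_Ioo (hW hu).1 (hW hu').1
        ((hW hu).2.trans (hW hu').2.symm) hne)
      (fun u hu => (Finset.mem_filter.mp hu).2)
  set T := W.biUnion fun u => extensions n u (q - p)
  have hT {w : List ℕ} (hw : w ∈ T) : MoranAdmissible n w ∧ w.length = q := by
    obtain ⟨u, hu, hwu⟩ := Finset.mem_biUnion.mp hw
    have := hmem (hW hu).1 hwu
    exact ⟨this.1, by rw [this.2, (hW hu).2]; omega⟩
  have hTcard : T.card ≤ 3 * ∏ i ∈ Finset.Icc (p + 1) q, n i := by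
    refine (Finset.card_biUnion_le_card_mul _ _ _ fun u hu => ?_).trans
      (Nat.mul_le_mul_right _ hWcard)
    have := card_extensions_le n u (q - p)
    rwa [(hW hu).2, show p + (q - p) = q by omega] at this
  have hcov (z : E) (hz : dist z x ≤ R) : ∃ w ∈ T, (z : ℝ) ∈ Icc (a w) (b w) := by
    obtain ⟨w, ⟨hw, hwq⟩, hzw⟩ := mem_iUnion₂.mp (hE z.2)
    rw [Subtype.dist_eq, Real.dist_eq, abs_le] at hz
    have hwp : w.take p ∈ W := by
      refine Finset.mem_filter.mpr
        ⟨?_, z, hM.Icc_subset_take hw p hzw, by constructor <;> linarith⟩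
      simpa [hwq, hpq] using mem_extensions_take (hw.take p) 0
    refine ⟨w, Finset.mem_biUnion.mpr ⟨_, hwp, ?_⟩, hzw⟩
    simpa [hwq] using mem_extensions_take hw p
  obtain ⟨s, hs, hcover⟩ := exists_finset_cover_of_forall_mem_Icc (r := r) T
    (fun w hw => (hM.length_eq (hT hw).1).trans_le ((hT hw).2 ▸ hrq)) x hcov
  exact ⟨s, hs.trans hTcard, hcover⟩

end IsMoranCoding

section spq

variable {n : ℕ → ℕ} {c : ℕ → ℝ}

theorem spq_mem_Icc (hn : ∀ k, 1 ≤ k → 1 ≤ n k) (hc : ∀ k, 1 ≤ k → 0 < c k ∧ c k ≤ 1 / (n k : ℝ))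
    {p : ℕ} (hp : 1 ≤ p) (q : ℕ) : spq n c p q ∈ Icc 0 1 := by
  have hmem {i : ℕ} (hi : i ∈ Finset.Icc p q) : 1 ≤ i := hp.trans (Finset.mem_Icc.mp hi).1
  have hN : 1 ≤ ∏ i ∈ Finset.Icc p q, (n i : ℝ) :=
    Finset.one_le_prod fun i hi => by exact_mod_cast hn i (hmem hi)
  have hC : 0 < ∏ i ∈ Finset.Icc p q, c i := Finset.prod_pos fun i hi => (hc i (hmem hi)).1
  have hCN : (∏ i ∈ Finset.Icc p q, c i) * ∏ i ∈ Finset.Icc p q, (n i : ℝ) ≤ 1 := by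
    rw [← Finset.prod_mul_distrib]
    refine Finset.prod_le_one (fun i hi => mul_nonneg (hc i (hmem hi)).1.le (Nat.cast_nonneg _))
      fun i hi => ?_
    have := (hc i (hmem hi)).2
    rwa [le_div_iff₀ (by exact_mod_cast zero_lt_one.trans_le (hn i (hmem hi)))] at this
  have hlog := Real.log_nonpos (mul_pos hC (by linarith)).le hCN
  rw [Real.log_mul hC.ne' (by positivity)] at hlog
  have hlogN := Real.log_nonneg hN
  exact ⟨div_nonneg hlogN (by linarith), div_le_one_of_le₀ (by linarith) (by linarith)⟩

noncomputable def maxSpq (n : ℕ → ℕ) (c : ℕ → ℝ) (δ : ℝ) (q : ℕ) : ℝ :=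
  sSup {t : ℝ | ∃ p : ℕ, 1 ≤ p ∧ p ≤ lIdx c δ q ∧ t = spq n c p q}

variable (hn : ∀ k, 1 ≤ k → 1 ≤ n k) (hc : ∀ k, 1 ≤ k → 0 < c k ∧ c k ≤ 1 / (n k : ℝ))
include hn hc

theorem spq_le_maxSpq {δ : ℝ} {p q : ℕ} (hp : 1 ≤ p) (hpq : p ≤ lIdx c δ q) :
    spq n c p q ≤ maxSpq n c δ q := by
  refine le_csSup ⟨1, ?_⟩ ⟨p, hp, hpq, rfl⟩
  rintro _ ⟨p', hp', -, rfl⟩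
  exact (spq_mem_Icc hn hc hp' q).2

theorem isBoundedUnder_le_maxSpq (δ : ℝ) : IsBoundedUnder (· ≤ ·) atTop (maxSpq n c δ) :=
  isBoundedUnder_of ⟨1, fun q => Real.sSup_le (by
    rintro _ ⟨p, hp, -, rfl⟩
    exact (spq_mem_Icc hn hc hp q).2) zero_le_one⟩

theorem limsup_maxSpq_nonneg (δ : ℝ) : 0 ≤ limsup (maxSpq n c δ) atTop :=
  le_limsup_of_frequently_le (Frequently.of_forall fun q => Real.sSup_nonneg (by
    rintro _ ⟨p, hp, -, rfl⟩
    exact (spq_mem_Icc hn hc hp q).1)) (isBoundedUnder_le_maxSpq hn hc δ)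

end spq

theorem succ_le_lIdx {c : ℕ → ℝ} (hc0 : ∀ k, 1 ≤ k → 0 < c k) {δ : ℝ} {p q : ℕ} (hpq : p < q)
    (hq : Real.log (cumProd c q) < 0)
    (h : (1 - δ) * Real.log (cumProd c q) < Real.log (cumProd c p)) :
    p + 1 ≤ lIdx c δ q := by
  refine le_csSup ⟨q, fun _ hk => hk.2.1⟩ ⟨by omega, hpq, ?_⟩
  change δ < _ / Real.log (cumProd c q)
  rw [log_prod_Icc_eq hc0 hpq.le, lt_div_iff_of_neg hq]
  linarith

theorem exists_succ_lt_le {L : ℕ → ℝ} (hL : Tendsto L atTop (𝓝 0)) {x : ℝ} (hx : 0 < x)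
    (h0 : x ≤ L 0) : ∃ k, L (k + 1) < x ∧ x ≤ L k := by
  classical
  have hex : ∃ j, L j < x := (hL.eventually (gt_mem_nhds hx)).exists
  have hpos : Nat.find hex ≠ 0 := fun h => (h ▸ Nat.find_spec hex).not_ge h0
  refine ⟨Nat.find hex - 1, ?_, not_lt.mp (Nat.find_min hex (by omega))⟩
  rw [Nat.sub_add_cancel (Nat.one_le_iff_ne_zero.mpr hpos)]
  exact Nat.find_spec hex

theorem exists_scale_indices {L : ℕ → ℝ} (hanti : Antitone L) (hL : Tendsto L atTop (𝓝 0))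
    {x y : ℝ} {K : ℕ} (hx : 0 < x) (hxy : x ≤ y) (hyK : y < L K) :
    ∃ p q, K ≤ p ∧ p ≤ q ∧ L (p + 1) < y ∧ y ≤ L p ∧ L (q + 1) < x ∧ x ≤ L q := by
  have hyL : y ≤ L 0 := hyK.le.trans (hanti (Nat.zero_le K))
  obtain ⟨p, hp1, hp⟩ := exists_succ_lt_le hL (hx.trans_le hxy) hyL
  obtain ⟨q, hq1, hq⟩ := exists_succ_lt_le hL hx (hxy.trans hyL)
  refine ⟨p, q, ?_, ?_, hp1, hp, hq1, hq⟩
  · by_contra! h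
    exact (hanti (show p + 1 ≤ K by omega)).not_gt (hp1.trans hyK)
  · by_contra! h
    exact (hanti (show q + 1 ≤ p by omega)).not_gt (hq1.trans_le (hxy.trans hp))

theorem mul_log_lt_log_add_two {δ D : ℝ} (hD : 0 < D) (hδ0 : 0 ≤ δ) (hδ1 : δ < 1) :
    δ * Real.log D < Real.log (D + 2) := by
  have hlog : Real.log D < Real.log (D + 2) := Real.log_lt_log hD (by linarith)
  rcases le_or_gt (Real.log D) 0 with h | h
  · nlinarith [Real.log_pos (show 1 < D + 2 by linarith)]
  · nlinarith

theorem mul_log_lt_log_of_scales {δ D lam r R x y : ℝ} (hD : 0 < D) (hlam0 : 0 < lam)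
    (hr : 0 < r) (hy : 0 < y) (hδ : δ < 1) (hlam : δ * Real.log D < Real.log lam)
    (hRx : lam * R ≤ D * x) (hyr : D * y < r) (hrR : r ^ (1 - δ) ≤ R) :
    (1 - δ) * Real.log y < Real.log x := by
  have hR : 0 < R := (Real.rpow_pos_of_pos hr _).trans_le hrR
  have hx : 0 < x := pos_of_mul_pos_right ((mul_pos hlam0 hR).trans_le hRx) hD.le
  have h1 := Real.log_le_log (by positivity) hrR
  have h2 := Real.log_le_log (by positivity) hRx
  have h3 := Real.log_lt_log (by positivity) hyr
  rw [Real.log_rpow hr] at h1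
  rw [Real.log_mul hlam0.ne' hR.ne', Real.log_mul hD.ne' hx.ne'] at h2
  rw [Real.log_mul hD.ne' hy.ne'] at h3
  nlinarith

theorem log_cumProd_sub_le {c : ℕ → ℝ} (hc0 : ∀ k, 1 ≤ k → 0 < c k) (hc1 : ∀ k, 1 ≤ k → c k ≤ 1)
    {ε D lam r R : ℝ} {p q : ℕ} (hε : 0 ≤ ε) (hD : 0 < D) (hlam : 0 < lam) (hr : 0 < r)
    (hR : 0 < R) (hpq : p ≤ q) (hp : D * cumProd c (p + 1) < lam * R)
    (hq : r ≤ D * cumProd c q) (hcp : ε * Real.log (cumProd c p) ≤ Real.log (c (p + 1)))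
    (hcq : ε * Real.log (cumProd c q) ≤ Real.log (c (q + 1))) :
    Real.log (cumProd c p) - Real.log (cumProd c (q + 1)) ≤
      Real.log lam + (Real.log R - Real.log r) + 2 * ε * (Real.log D - Real.log r) := by
  have hP := cumProd_pos hc0
  have hlog_succ (k : ℕ) :
      Real.log (cumProd c (k + 1)) = Real.log (cumProd c k) + Real.log (c (k + 1)) := by
    rw [cumProd_succ, Real.log_mul (hP k).ne' (hc0 _ (by omega)).ne']
  have h1 := Real.log_lt_log (mul_pos hD (hP _)) hp
  have h2 := Real.log_le_log hr hq
  rw [Real.log_mul hD.ne' (hP _).ne', Real.log_mul hlam.ne' hR.ne', hlog_succ] at h1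
  rw [Real.log_mul hD.ne' (hP _).ne'] at h2
  have h3 : ε * (Real.log r - Real.log D) ≤ ε * Real.log (cumProd c q) :=
    mul_le_mul_of_nonneg_left (by linarith) hε
  have h4 : ε * Real.log (cumProd c q) ≤ ε * Real.log (cumProd c p) :=
    mul_le_mul_of_nonneg_left
      (Real.log_le_log (hP q) (cumProd_antitone hc0 hc1 hpq)) hε
  rw [hlog_succ]
  linarith

theorem log_prod_eq_spq_mul {n : ℕ → ℕ} {c : ℕ → ℝ} (hc0 : ∀ k, 1 ≤ k → 0 < c k) {p q : ℕ}
    (hpq : p ≤ q) (hlt : Real.log (cumProd c q) < Real.log (cumProd c p)) :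
    Real.log (∏ i ∈ Finset.Icc (p + 1) q, (n i : ℝ)) =
      spq n c (p + 1) q * (Real.log (cumProd c p) - Real.log (cumProd c q)) := by
  rw [spq, log_prod_Icc_eq hc0 hpq, neg_sub, div_mul_cancel₀ _ (sub_pos.mpr hlt).ne']

theorem prod_le_of_scales {n : ℕ → ℕ} {c : ℕ → ℝ} (hn : ∀ k, 1 ≤ k → 1 ≤ n k)
    (hc : ∀ k, 1 ≤ k → 0 < c k ∧ c k ≤ 1 / (n k : ℝ)) {p q : ℕ} {δ g s₁ D lam r R : ℝ}
    (hδ : 0 < δ) (hg : 0 ≤ g) (hD : 0 < D) (hlam : 1 < lam) (hr : 0 < r) (hrR : r ≤ R)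
    (hrδ : r ^ (1 - δ) ≤ R) (hpq : p ≤ q)
    (hp1 : D * cumProd c (p + 1) < lam * R) (hp : lam * R ≤ D * cumProd c p)
    (hq1 : D * cumProd c (q + 1) < r) (hq : r ≤ D * cumProd c q)
    (hcp : δ * g / 2 * Real.log (cumProd c p) ≤ Real.log (c (p + 1)))
    (hcq : δ * g / 2 * Real.log (cumProd c q) ≤ Real.log (c (q + 1)))
    (hs : spq n c (p + 1) (q + 1) ≤ s₁) :
    ∏ i ∈ Finset.Icc (p + 1) (q + 1), (n i : ℝ) ≤ lam * D ^ (δ * g) * (R / r) ^ (s₁ + g) := by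
  have hR : 0 < R := hr.trans_le hrR
  have hc0 (k : ℕ) (hk : 1 ≤ k) : 0 < c k := (hc k hk).1
  have hc1 (k : ℕ) (hk : 1 ≤ k) : c k ≤ 1 :=
    (hc k hk).2.trans (div_le_one_of_le₀ (by exact_mod_cast hn k hk) (Nat.cast_nonneg _))
  have hP := cumProd_pos hc0
  have hY : 0 < ∏ i ∈ Finset.Icc (p + 1) (q + 1), (n i : ℝ) := Finset.prod_pos fun i hi => by
    exact_mod_cast (hn i (by linarith [(Finset.mem_Icc.mp hi).1])).trans_lt' one_pos
  have hPqp : cumProd c (q + 1) < cumProd c p :=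
    lt_of_mul_lt_mul_left (hq1.trans_le (hrR.trans (by nlinarith)) |>.trans_le hp) hD.le
  obtain ⟨ht0, ht1⟩ := spq_mem_Icc hn hc (Nat.le_add_left 1 p) (q + 1)
  have hℓ := log_cumProd_sub_le hc0 hc1 (by positivity) hD (by linarith) hr hR hpq hp1 hq hcp hcq
  have hlogR : 0 ≤ Real.log R - Real.log r := sub_nonneg.mpr (Real.log_le_log hr hrR)
  have hlogD : 0 ≤ δ * g * (Real.log D - Real.log r) := mul_nonneg (by positivity) <|
    sub_nonneg.mpr <| Real.log_le_log hr <| hq.trans <|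
      mul_le_of_le_one_right hD.le (cumProd_le_one hc0 hc1 q)
  have hlogrδ : (1 - δ) * Real.log r ≤ Real.log R := by
    simpa [Real.log_rpow hr] using Real.log_le_log (by positivity) hrδ
  have hlam0 : 0 ≤ Real.log lam := Real.log_nonneg hlam.le
  rw [← Real.log_le_log_iff hY (by positivity), Real.log_mul (by positivity) (by positivity),
    Real.log_mul (by positivity) (by positivity), Real.log_rpow hD, Real.log_rpow (by positivity),
    Real.log_div hR.ne' hr.ne', log_prod_eq_spq_mul hc0 (by omega) (Real.log_lt_log (hP _) hPqp)]
  linarith [mul_le_mul_of_nonneg_left hℓ ht0, mul_le_of_le_one_left hlam0 ht1,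
    mul_le_mul_of_nonneg_right hs hlogR, mul_le_of_le_one_left hlogD ht1,
    mul_le_mul_of_nonneg_left (show -(δ * Real.log r) ≤ Real.log R - Real.log r by linarith) hg]

theorem IsMoranCoding.exists_coverNum_le {n : ℕ → ℕ} {c : ℕ → ℝ} {a b : List ℕ → ℝ}
    (hM : IsMoranCoding n c a b) (hab : a [] < b [])
    (hn : ∀ k, 1 ≤ k → 2 ≤ n k) (hc : ∀ k, 1 ≤ k → 0 < c k ∧ c k ≤ 1 / (n k : ℝ))
    (hlim : Tendsto (fun k => Real.log (c k) / Real.log (cumProd c k)) atTop (𝓝 0))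
    {E : Set ℝ}
    (hE : ∀ k, E ⊆ ⋃ w ∈ {w : List ℕ | MoranAdmissible n w ∧ w.length = k}, Icc (a w) (b w))
    {δ : ℝ} (hδ : δ ∈ Ioo 0 1) {s : ℝ} (hs : limsup (maxSpq n c δ) atTop < s) :
    ∃ b₀ C : ℝ, 0 < b₀ ∧ 0 < C ∧ ∀ r R : ℝ,
      0 < r → r < r ^ (1 - δ) → r ^ (1 - δ) ≤ R → R < b₀ →
        (coverNum E r R : ℝ) ≤ C * (R / r) ^ s := by
  obtain ⟨hδ0, hδ1⟩ := hδ
  have hn1 (k : ℕ) (hk : 1 ≤ k) : 1 ≤ n k := (hn k hk).trans' (by norm_num)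
  have hc0 (k : ℕ) (hk : 1 ≤ k) : 0 < c k := (hc k hk).1
  have hc_half (k : ℕ) (hk : 1 ≤ k) : c k ≤ 1 / 2 :=
    (hc k hk).2.trans (one_div_le_one_div_of_le two_pos (by exact_mod_cast hn k hk))
  have hc1 (k : ℕ) (hk : 1 ≤ k) : c k < 1 := (hc_half k hk).trans_lt (by norm_num)
  have hP := cumProd_pos hc0
  set D := b [] - a []
  have hD : 0 < D := sub_pos.mpr hab
  set lam := D + 2
  have hlam := mul_log_lt_log_add_two hD hδ0.le hδ1
  obtain ⟨s₁, hs₁, hs₁s⟩ := exists_between hs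
  obtain ⟨K, hK⟩ := eventually_atTop.mp
    ((eventually_mul_log_cumProd_le hc0 hc1 hlim (ε := δ * (s - s₁) / 2) (by
      have := sub_pos.mpr hs₁s; positivity)).and
      (eventually_lt_of_limsup_lt hs₁ (isBoundedUnder_le_maxSpq hn1 hc δ)))
  refine ⟨D * cumProd c K / lam, 3 * (lam * D ^ (δ * (s - s₁))), by have := hP K; positivity,
    by positivity, fun r R hr hrr hrδ hRb => ?_⟩
  have hrR : r < R := hrr.trans_le hrδ
  obtain ⟨p, q, hKp, hpq, hp1, hp, hq1, hq⟩ := exists_scale_indices (L := fun k => D * cumProd c k)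
    (fun i j hij => mul_le_mul_of_nonneg_left
      (cumProd_antitone hc0 (fun k hk => (hc1 k hk).le) hij) hD.le)
    (by simpa using (tendsto_cumProd_zero hc0 hc_half).const_mul D) hr
    (hrR.le.trans (le_mul_of_one_le_left (hr.trans hrR).le (by linarith)))
    ((lt_div_iff₀' (by positivity)).mp hRb)
  have hq1' : Real.log (cumProd c (q + 1)) < 0 := by
    refine Real.log_neg (hP _) (lt_of_mul_lt_mul_left (hq1.trans_le (hq.trans ?_)) hD.le)
    simpa using mul_le_of_le_one_right hD.le (cumProd_le_one hc0 (fun k hk => (hc1 k hk).le) q)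
  have hδc := mul_log_lt_log_of_scales hD (by positivity) hr (hP _) hδ1 hlam hp hq1 hrδ
  have ht := (spq_le_maxSpq hn1 hc (by omega) (succ_le_lIdx hc0 (by omega) hq1' hδc)).trans
    (hK (q + 1) (by omega)).2.le
  have hcover := hM.coverNum_le (R := R) (hE (q + 1)) (by omega) (mul_pos hD (hP p))
    (by nlinarith) hq1.le
  have hprod := prod_le_of_scales hn1 hc hδ0 (sub_pos.mpr hs₁s).le hD (by linarith) hr hrR.le
    hrδ hpq hp1 hp hq1 hq (hK p hKp).1 (hK q (by omega)).1 ht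
  rw [add_sub_cancel] at hprod
  calc (coverNum E r R : ℝ) ≤ 3 * ∏ i ∈ Finset.Icc (p + 1) (q + 1), (n i : ℝ) := by
        simpa using (Nat.cast_le (α := ℝ)).mpr hcover
    _ ≤ 3 * (lam * D ^ (δ * (s - s₁)) * (R / r) ^ s) := by gcongr
    _ = _ := by ring

/-- Upper bound: if `E ∈ M(J, {n_k}, {c_k})` with `log c_k / log (c_1 ⋯ c_k) → 0`, then
for `δ ∈ (0,1)`, `h_E(δ) ≤ limsup_{q→∞} max_{1 ≤ p ≤ l_{q,δ}} s_{p,q}`; more precisely,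
for every `s` strictly greater than this limsup there are `b, C > 0` with
`N_{r,R}(E) ≤ C (R/r)^s` for all `0 < r < r^(1-δ) ≤ R < b`. -/
theorem hFun_moran_le (J : Set ℝ) (n : ℕ → ℕ) (c : ℕ → ℝ)
    (hn : ∀ k : ℕ, 1 ≤ k → 2 ≤ n k)
    (hc : ∀ k : ℕ, 1 ≤ k → 0 < c k ∧ c k ≤ 1 / (n k : ℝ))
    (hlim : Filter.Tendsto
      (fun k : ℕ => Real.log (c k) / Real.log (∏ i ∈ Finset.Icc 1 k, c i))
      Filter.atTop (𝓝 0))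
    (E : Set ℝ) (hE : IsMoranSet J n c E) (δ : ℝ) (hδ : δ ∈ Set.Ioo (0 : ℝ) 1) :
    hFun E δ ≤ Filter.limsup (fun q : ℕ =>
        sSup {s : ℝ | ∃ p : ℕ, 1 ≤ p ∧ p ≤ lIdx c δ q ∧ s = spq n c p q}) Filter.atTop ∧
      ∀ s : ℝ,
        Filter.limsup (fun q : ℕ =>
          sSup {t : ℝ | ∃ p : ℕ, 1 ≤ p ∧ p ≤ lIdx c δ q ∧ t = spq n c p q})
          Filter.atTop < s →
        ∃ b C : ℝ, 0 < b ∧ 0 < C ∧ ∀ r R : ℝ,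
          0 < r → r < r ^ (1 - δ) → r ^ (1 - δ) ≤ R → R < b →
            (coverNum E r R : ℝ) ≤ C * (R / r) ^ s := by
  obtain ⟨A, B, hAB, -, a, b, rfl, rfl, hstep, hdisj, rfl⟩ := hE
  have hM : IsMoranCoding n c a b := ⟨hstep, hdisj⟩
  have key (s : ℝ) (hs : limsup (maxSpq n c δ) atTop < s) :=
    hM.exists_coverNum_le hAB hn hc hlim (fun k => iInter_subset _ k) hδ hs
  have hn1 (k : ℕ) (hk : 1 ≤ k) : 1 ≤ n k := (hn k hk).trans' (by norm_num)
  exact ⟨hFun_le_of_forall_lt (limsup_maxSpq_nonneg hn1 hc δ) key, key⟩
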